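/- Let a > 0, b > 0, let k be a nonnegative integer, and set λ = a²/(4b). Then ∫_0^∞ x^k exp{−ax − bx²} dx = (−1)^k b^{−(k+1)/2} { Σ_{h=0}^{⌊k/2⌋} C(k,2h) λ^{k/2−h} Γ(h + 1/2) [ (1 − Φ(√(2λ))) e^{λ} + (1/2) Σ_{j=0}^{h−1} λ^{j+1/2}/Γ(j + 3/2) ] − (1/2) Σ_{h=0}^{⌊k/2⌋} h! C(k,2h+1) λ^{(k−1)/2−h} Σ_{j=0}^{h} λ^{j}/j! }, where C(k,m) denotes the binomial coefficient (taken to be 0 when m > k) and ⌊k/2⌋ is the greatest integer not exceeding k/2. -/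

import Mathlib

/-!
Completing the square, `a x + b x² = (√b x + c)² - c²` with `c = √λ`, and substituting
`u = √b x + c` turn the integral into `e^λ b^{-(k+1)/2} ∫_c^∞ (u - c)^k e^{-u²} du`. Expanding
`(u - c)^k` binomially leaves the Gaussian tail moments `J_m(c) = ∫_c^∞ u^m e^{-u²} du`, which by
parts satisfy `J_{m+2} = (m + 1)/2 J_m + c^{m+1} e^{-c²}/2`. Starting from `J_1 = e^{-c²}/2` and
`J_0 = √π (1 - Φ(√2 c))`, this gives the odd and the even moments in closed form; the even ones
produce the `Γ(h + 1/2)` terms, the odd ones the truncated exponential series.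
-/

open MeasureTheory Set Finset Filter Real Topology Nat

lemma integrable_pow_mul_exp_neg_sq (n : ℕ) : Integrable fun x : ℝ => x ^ n * exp (-x ^ 2) := by
  simpa using integrable_rpow_mul_exp_neg_mul_sq one_pos (s := n)
    (by linarith [n.cast_nonneg (α := ℝ)])

lemma tendsto_pow_mul_exp_neg_sq_atTop (n : ℕ) :
    Tendsto (fun x : ℝ => x ^ n * exp (-x ^ 2)) atTop (𝓝 0) := by
  refine ((tendsto_rpow_abs_mul_exp_neg_mul_sq_cocompact one_pos n).mono_left
    atTop_le_cocompact).congr' ?_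
  filter_upwards [eventually_ge_atTop 0] with x hx
  simp [abs_of_nonneg hx]

lemma hasDerivAt_exp_neg_sq (u : ℝ) :
    HasDerivAt (fun u => exp (-u ^ 2)) (-(2 * u) * exp (-u ^ 2)) u :=
  ((hasDerivAt_pow 2 u).fun_neg.exp).congr_deriv (by ring)

lemma integral_Ioi_comp_mul_add {E : Type*} [NormedAddCommGroup E] [NormedSpace ℝ E]
    (f : ℝ → E) (a c : ℝ) {s : ℝ} (hs : 0 < s) :
    ∫ x in Ioi a, f (s * x + c) = s⁻¹ • ∫ x in Ioi (s * a + c), f x := by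
  have hshift := (measurePreserving_add_right volume c).setIntegral_preimage_emb
    (measurableEmbedding_addRight c) f (Ioi (s * a + c))
  rw [integral_comp_mul_left_Ioi (fun y => f (y + c)) a hs, ← hshift]
  simp [preimage_add_const_Ioi]

lemma integral_Ioi_exp_neg_sq_div_two {Φ : ℝ → ℝ}
    (hΦ : ∀ x, Φ x = (1 / √(2 * π)) * ∫ v in Iic x, exp (-v ^ 2 / 2)) (x : ℝ) :
    ∫ v in Ioi x, exp (-v ^ 2 / 2) = √(2 * π) * (1 - Φ x) := by
  have hform : (fun v : ℝ => exp (-v ^ 2 / 2)) = fun v => exp (-(1 / 2) * v ^ 2) := by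
    ext v; ring_nf
  have htotal : ∫ v, exp (-v ^ 2 / 2) = √(2 * π) := by
    rw [hform, integral_gaussian]; ring_nf
  have hint : Integrable fun v : ℝ => exp (-v ^ 2 / 2) := by
    rw [hform]; exact integrable_exp_neg_mul_sq (by norm_num)
  rw [← compl_Iic, setIntegral_compl measurableSet_Iic hint, htotal, hΦ]
  have : √(2 * π) ≠ 0 := by positivity
  field_simp

lemma sq_rpow_eq_pow {c x : ℝ} {n : ℕ} (hc : 0 ≤ c) (h : 2 * x = n) : (c ^ 2) ^ x = c ^ n := by
  rw [← rpow_natCast c 2, ← rpow_mul hc, Nat.cast_ofNat, h, rpow_natCast]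

lemma sum_range_two_mul {M : Type*} [AddCommMonoid M] (f : ℕ → M) (n : ℕ) :
    ∑ m ∈ range (2 * n), f m = ∑ h ∈ range n, f (2 * h) + ∑ h ∈ range n, f (2 * h + 1) := by
  induction n with
  | zero => simp
  | succ n ih =>
    rw [mul_add, mul_one, sum_range_succ, sum_range_succ, ih, sum_range_succ, sum_range_succ]
    abel

lemma sum_range_succ_eq_sum_even_add_sum_odd {M : Type*} [AddCommMonoid M] {f : ℕ → M} {k : ℕ}
    (hf : ∀ m, k < m → f m = 0) :
    ∑ m ∈ range (k + 1), f m
      = ∑ h ∈ range (k / 2 + 1), f (2 * h) + ∑ h ∈ range (k / 2 + 1), f (2 * h + 1) := by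
  rw [← sum_range_two_mul]
  refine sum_subset (range_subset_range.2 (by omega)) fun m _ hm => hf m ?_
  simpa using hm

noncomputable def gaussianTailMoment (n : ℕ) (c : ℝ) : ℝ := ∫ u in Ioi c, u ^ n * exp (-u ^ 2)

namespace gaussianTailMoment

lemma zero_eq {Φ : ℝ → ℝ}
    (hΦ : ∀ x, Φ x = (1 / √(2 * π)) * ∫ v in Iic x, exp (-v ^ 2 / 2)) (c : ℝ) :
    gaussianTailMoment 0 c = √π * (1 - Φ (√2 * c)) := by
  have hscale := integral_comp_mul_left_Ioi (fun v => exp (-v ^ 2 / 2)) c (b := √2)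
    (by positivity)
  simp only [mul_pow, sq_sqrt zero_le_two, smul_eq_mul] at hscale
  rw [integral_Ioi_exp_neg_sq_div_two hΦ, sqrt_mul zero_le_two] at hscale
  have : √2 ≠ 0 := by positivity
  simp only [gaussianTailMoment, pow_zero, one_mul]
  rw [show (fun u : ℝ => exp (-u ^ 2)) = fun u => exp (-(2 * u ^ 2) / 2) by ext; ring_nf, hscale]
  field_simp

lemma one (c : ℝ) : gaussianTailMoment 1 c = exp (-c ^ 2) / 2 := by
  have hderiv (u : ℝ) : HasDerivAt (fun u => exp (-u ^ 2)) (-2 * (u ^ 1 * exp (-u ^ 2))) u :=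
    (hasDerivAt_exp_neg_sq u).congr_deriv (by ring)
  have hFTC := integral_Ioi_of_hasDerivAt_of_tendsto' (a := c) (fun u _ => hderiv u)
    ((integrable_pow_mul_exp_neg_sq 1).const_mul (-2)).integrableOn (m := 0) (by simp)
  rw [integral_const_mul] at hFTC
  rw [gaussianTailMoment]
  linarith

lemma add_two (n : ℕ) (c : ℝ) :
    gaussianTailMoment (n + 2) c
      = (n + 1) / 2 * gaussianTailMoment n c + c ^ (n + 1) * exp (-c ^ 2) / 2 := by
  have hderiv (u : ℝ) : HasDerivAt (fun u => u ^ (n + 1) * exp (-u ^ 2))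
      ((n + 1) * (u ^ n * exp (-u ^ 2)) - 2 * (u ^ (n + 2) * exp (-u ^ 2))) u :=
    ((hasDerivAt_pow (n + 1) u).fun_mul (hasDerivAt_exp_neg_sq u)).congr_deriv
      (by push_cast; ring)
  have hint_n := ((integrable_pow_mul_exp_neg_sq n).const_mul ((n : ℝ) + 1)).integrableOn
    (s := Ioi c)
  have hint_n2 := ((integrable_pow_mul_exp_neg_sq (n + 2)).const_mul 2).integrableOn (s := Ioi c)
  have hFTC := integral_Ioi_of_hasDerivAt_of_tendsto' (fun u _ => hderiv u) (hint_n.sub hint_n2)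
    (tendsto_pow_mul_exp_neg_sq_atTop (n + 1))
  rw [integral_sub hint_n hint_n2, integral_const_mul, integral_const_mul] at hFTC
  rw [gaussianTailMoment, gaussianTailMoment]
  linarith

lemma two_mul_add_one (h : ℕ) (c : ℝ) :
    gaussianTailMoment (2 * h + 1) c
      = h ! / 2 * exp (-c ^ 2) * ∑ j ∈ range (h + 1), (c ^ 2) ^ j / j ! := by
  induction h with
  | zero => simp [one, div_eq_inv_mul]
  | succ h ih =>
    rw [show 2 * (h + 1) + 1 = 2 * h + 1 + 2 by ring, add_two, ih, sum_range_succ _ (h + 1),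
      Nat.factorial_succ, show 2 * h + 1 + 1 = 2 * (h + 1) by ring, pow_mul]
    push_cast
    field_simp
    ring

lemma two_mul (h : ℕ) (c : ℝ) :
    gaussianTailMoment (2 * h) c = Gamma (h + 1 / 2) * (gaussianTailMoment 0 c / √π
      + exp (-c ^ 2) / 2 * ∑ j ∈ range h, c ^ (2 * j + 1) / Gamma (j + 3 / 2)) := by
  induction h with
  | zero =>
    simp only [Nat.cast_zero, zero_add, Gamma_one_half_eq, range_zero, sum_empty]
    field_simp
    ring
  | succ h ih =>
    have hΓpos : 0 < Gamma (h + 1 / 2) := Gamma_pos_of_pos (by positivity)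
    have hΓ : Gamma ((h + 1 : ℕ) + 1 / 2) = (h + 1 / 2) * Gamma (h + 1 / 2) := by
      rw [← Gamma_add_one (by positivity)]; push_cast; ring_nf
    rw [show 2 * (h + 1) = 2 * h + 2 by ring, add_two, ih, sum_range_succ, hΓ,
      show (h : ℝ) + 3 / 2 = h + 1 / 2 + 1 by ring, Gamma_add_one (by positivity)]
    push_cast
    field_simp
    ring

end gaussianTailMoment

lemma integral_Ioi_sub_pow_mul_exp_neg_sq (c : ℝ) (k : ℕ) :
    ∫ u in Ioi c, (u - c) ^ k * exp (-u ^ 2)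
      = ∑ m ∈ range (k + 1), (k.choose m : ℝ) * (-c) ^ (k - m) * gaussianTailMoment m c := by
  have hexpand (u : ℝ) : (u - c) ^ k * exp (-u ^ 2)
      = ∑ m ∈ range (k + 1), (k.choose m : ℝ) * (-c) ^ (k - m) * (u ^ m * exp (-u ^ 2)) := by
    rw [sub_eq_add_neg, add_pow, sum_mul]
    exact sum_congr rfl fun m _ => by ring
  simp_rw [hexpand]
  rw [integral_finsetSum _
    fun m _ => ((integrable_pow_mul_exp_neg_sq m).const_mul _).integrableOn]
  simp_rw [integral_const_mul, gaussianTailMoment]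

lemma integral_Ioi_pow_mul_exp_neg_linear_quadratic_eq_sum {s : ℝ} (hs : 0 < s) (c : ℝ)
    (k : ℕ) :
    ∫ x in Ioi (0 : ℝ), x ^ k * exp (-(2 * s * c * x) - s ^ 2 * x ^ 2)
      = exp (c ^ 2) / s ^ (k + 1) *
        ∑ m ∈ range (k + 1), (k.choose m : ℝ) * (-c) ^ (k - m) * gaussianTailMoment m c := by
  have hsquare (x : ℝ) : x ^ k * exp (-(2 * s * c * x) - s ^ 2 * x ^ 2)
      = exp (c ^ 2) / s ^ k * ((s * x + c - c) ^ k * exp (-(s * x + c) ^ 2)) := by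
    have : exp (-(2 * s * c * x) - s ^ 2 * x ^ 2) = exp (c ^ 2) * exp (-(s * x + c) ^ 2) := by
      rw [← exp_add]; ring_nf
    rw [this, add_sub_cancel_right, mul_pow]
    field_simp
  simp_rw [hsquare]
  rw [integral_const_mul,
    integral_Ioi_comp_mul_add (fun u => (u - c) ^ k * exp (-u ^ 2)) 0 c hs,
    mul_zero, zero_add, integral_Ioi_sub_pow_mul_exp_neg_sq, smul_eq_mul, pow_succ]
  field_simp
  ring

lemma exp_sq_mul_even_binomial_term {c : ℝ} (hc : 0 ≤ c) {k h : ℕ} (hh : 2 * h ≤ k) :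
    exp (c ^ 2) * ((k.choose (2 * h) : ℝ) * (-c) ^ (k - 2 * h) * gaussianTailMoment (2 * h) c)
      = (-1) ^ k * ((k.choose (2 * h) : ℝ) * (c ^ 2) ^ ((k : ℝ) / 2 - (h : ℝ))
          * Gamma ((h : ℝ) + 1 / 2) * (gaussianTailMoment 0 c / √π * exp (c ^ 2)
            + 1 / 2 * ∑ j ∈ range h, (c ^ 2) ^ ((j : ℝ) + 1 / 2) / Gamma ((j : ℝ) + 3 / 2))) := by
  have hsign : (-1 : ℝ) ^ k = (-1) ^ (k - 2 * h) := by
    conv_lhs => rw [← Nat.sub_add_cancel hh, pow_add, pow_mul, neg_one_sq, one_pow, mul_one]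
  have hpow : (c ^ 2) ^ ((k : ℝ) / 2 - (h : ℝ)) = c ^ (k - 2 * h) :=
    sq_rpow_eq_pow hc (by rw [Nat.cast_sub hh]; push_cast; ring)
  have hsum : ∑ j ∈ range h, (c ^ 2) ^ ((j : ℝ) + 1 / 2) / Gamma ((j : ℝ) + 3 / 2)
      = ∑ j ∈ range h, c ^ (2 * j + 1) / Gamma ((j : ℝ) + 3 / 2) :=
    sum_congr rfl fun j _ => by rw [sq_rpow_eq_pow hc (n := 2 * j + 1) (by push_cast; ring)]
  rw [hsign, hpow, hsum, gaussianTailMoment.two_mul, neg_pow, exp_neg]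
  field_simp

lemma exp_sq_mul_odd_binomial_term {c : ℝ} (hc : 0 ≤ c) (k h : ℕ) :
    exp (c ^ 2) * ((k.choose (2 * h + 1) : ℝ) * (-c) ^ (k - (2 * h + 1))
        * gaussianTailMoment (2 * h + 1) c)
      = -(1 / 2) * ((-1) ^ k * ((h ! : ℝ) * (k.choose (2 * h + 1) : ℝ)
          * (c ^ 2) ^ (((k : ℝ) - 1) / 2 - (h : ℝ))
          * ∑ j ∈ range (h + 1), (c ^ 2) ^ j / (j ! : ℝ))) := by
  rcases lt_or_ge k (2 * h + 1) with hk | hh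
  · simp [Nat.choose_eq_zero_of_lt hk]
  have hsign : (-1 : ℝ) ^ k = -(-1) ^ (k - (2 * h + 1)) := by
    conv_lhs => rw [← Nat.sub_add_cancel hh, pow_add, pow_succ, pow_mul, neg_one_sq, one_pow]
    ring
  have hpow : (c ^ 2) ^ (((k : ℝ) - 1) / 2 - (h : ℝ)) = c ^ (k - (2 * h + 1)) :=
    sq_rpow_eq_pow hc (by rw [Nat.cast_sub hh]; push_cast; ring)
  rw [hsign, hpow, gaussianTailMoment.two_mul_add_one, neg_pow, exp_neg]
  field_simp

theorem integral_pow_mul_exp_neg_linear_quadratic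
    (a b : ℝ) (ha : 0 < a) (hb : 0 < b) (k : ℕ)
    (lam : ℝ) (hlam : lam = a ^ 2 / (4 * b))
    (Φ : ℝ → ℝ)
    (hΦ : ∀ x, Φ x = (1 / Real.sqrt (2 * Real.pi)) * ∫ v in Set.Iic x, Real.exp (-v ^ 2 / 2)) :
    ∫ x in Set.Ioi (0 : ℝ), x ^ k * Real.exp (-(a * x) - b * x ^ 2)
      = (-1 : ℝ) ^ k * b ^ (-(((k : ℝ) + 1) / 2)) *
        ((∑ h ∈ Finset.range (k / 2 + 1),
            (Nat.choose k (2 * h) : ℝ) * lam ^ ((k : ℝ) / 2 - (h : ℝ))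
              * Real.Gamma ((h : ℝ) + 1 / 2) *
              ((1 - Φ (Real.sqrt (2 * lam))) * Real.exp lam
                + (1 / 2) * ∑ j ∈ Finset.range h,
                    lam ^ ((j : ℝ) + 1 / 2) / Real.Gamma ((j : ℝ) + 3 / 2)))
          - (1 / 2) * ∑ h ∈ Finset.range (k / 2 + 1),
              (Nat.factorial h : ℝ) * (Nat.choose k (2 * h + 1) : ℝ)
                * lam ^ (((k : ℝ) - 1) / 2 - (h : ℝ)) *
                ∑ j ∈ Finset.range (h + 1), lam ^ j / (Nat.factorial j : ℝ)) := by
  obtain ⟨s, hs, rfl⟩ : ∃ s, 0 < s ∧ b = s ^ 2 := ⟨√b, sqrt_pos.2 hb, (sq_sqrt hb.le).symm⟩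
  obtain ⟨c, hc, rfl⟩ : ∃ c, 0 < c ∧ a = 2 * s * c := ⟨a / (2 * s), by positivity, by field_simp⟩
  obtain rfl : lam = c ^ 2 := by rw [hlam]; field_simp; ring
  have hΦc : 1 - Φ (√(2 * c ^ 2)) = gaussianTailMoment 0 c / √π := by
    rw [gaussianTailMoment.zero_eq hΦ, sqrt_mul zero_le_two, sqrt_sq hc.le]
    field_simp
  have heven (h : ℕ) (hh : h ∈ range (k / 2 + 1)) :=
    exp_sq_mul_even_binomial_term hc.le (k := k) (h := h) (by rw [Finset.mem_range] at hh; omega)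
  rw [hΦc, integral_Ioi_pow_mul_exp_neg_linear_quadratic_eq_sum hs,
    sum_range_succ_eq_sum_even_add_sum_odd fun m hm => by simp [Nat.choose_eq_zero_of_lt hm],
    rpow_neg (sq_nonneg s), sq_rpow_eq_pow hs.le (n := k + 1) (by push_cast; ring),
    div_eq_mul_inv, mul_comm (exp _), mul_assoc, mul_add, mul_sum, mul_sum, sum_congr rfl heven,
    sum_congr rfl fun h _ => exp_sq_mul_odd_binomial_term hc.le k h, ← mul_sum, ← mul_sum,
    ← mul_sum]
  ring
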